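/- arXiv:1304.0818 — 2 statements merged into one kernel-verified Lean document; each statement's English description precedes it below -/
import Mathlib

section
/- Let $\tilde E$ be a locally compact separable metric space and $\tilde{\mathcal C}\subset C_0(\tilde E)$ a linear subspace satisfying: for every $f\in C_0(\tilde E)$ there exists $\tilde f\in\tilde{\mathcal C}$ such that for every $\varepsilon>0$ there exists $f_\varepsilon\in\tilde{\mathcal C}$ with $|f-f_\varepsilon|\le\varepsilon\tilde f$ pointwise. Then for any positive linear functional $\Lambda:\tilde{\mathcal C}\to\mathbb R$ there exists a unique locally finite Borel measure $\mu$ on $\tilde E$ with $\int f\,d\mu=\Lambda(f)$ for all $f\in\tilde{\mathcal C}$. -/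
/-!
Transport the problem to `C_c(E, ℝ)`: there `C` is a subspace `D` which is dense for relatively
uniform convergence (`f_ε → f` with regulator `f̃`) and, in particular, majorizing. By the
M. Riesz extension theorem `Λ` extends to a positive linear functional on `C_c(E, ℝ)`, and the
Riesz–Markov–Kakutani theorem represents this extension by a regular measure. A positive linear
functional `Φ` satisfies `|Φ f - Φ f_ε| ≤ ε Φ f̃`, so it is determined by its values on `D`; hence
any two representing measures induce the same functional on `C_c(E, ℝ)`, and being regular they
coincide.
-/

open MeasureTheory CompactlySupported Filter Topology

instance CompactlySupportedContinuousMap.instPosSMulMono {X R β : Type*} [TopologicalSpace X]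
    [TopologicalSpace β] [Zero β] [PartialOrder β] [Zero R] [Preorder R] [SMulZeroClass R β]
    [ContinuousConstSMul R β] [PosSMulMono R β] : PosSMulMono R C_c(X, β) :=
  PosSMulMono.lift (⇑) .rfl fun _ _ => rfl

theorem eq_zero_of_forall_abs_le_mul {a c : ℝ} (h : ∀ ε > 0, |a| ≤ ε * c) : a = 0 := by
  have hlim : Tendsto (fun ε => ε * c) (𝓝[>] 0) (𝓝 0) :=
    ((continuous_mul_const c).tendsto' 0 0 (zero_mul c)).mono_left nhdsWithin_le_nhds
  exact abs_nonpos_iff.1 (ge_of_tendsto hlim (eventually_nhdsWithin_of_forall h))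

section OrderedModule

variable {E : Type*} [AddCommGroup E] [Module ℝ E]

theorem exists_positiveLinearMap_extend_of_majorizing [PartialOrder E] [IsOrderedAddMonoid E]
    [PosSMulMono ℝ E] {p : Submodule ℝ E} (ℓ : p →ₗ[ℝ] ℝ)
    (hℓ : ∀ x : p, 0 ≤ (x : E) → 0 ≤ ℓ x) (hp : ∀ y : E, ∃ x ∈ p, y ≤ x) :
    ∃ Φ : E →ₚ[ℝ] ℝ, ∀ x : p, Φ x = ℓ x := by
  obtain ⟨g, hgℓ, hg⟩ := riesz_extension (PointedCone.positive ℝ E) ⟨p, ℓ⟩ hℓ fun y => by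
    obtain ⟨x, hxp, hyx⟩ := hp (-y)
    exact ⟨⟨x, hxp⟩, neg_le_iff_add_nonneg.1 hyx⟩
  exact ⟨.mk₀ g hg, hgℓ⟩

variable [Lattice E]

theorem PositiveLinearMap.abs_apply_sub_apply_le (Φ : E →ₚ[ℝ] ℝ) {f g t : E} {ε : ℝ}
    (h : |f - g| ≤ ε • t) : |Φ f - Φ g| ≤ ε * Φ t := by
  rw [← map_sub, ← smul_eq_mul, ← map_smul]
  exact abs_le'.2 ⟨Φ.monotone ((le_abs_self _).trans h),
    by rw [← map_neg]; exact Φ.monotone ((neg_le_abs _).trans h)⟩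

def RelativelyUniformlyDense (D : Set E) : Prop :=
  ∀ f : E, ∃ t ∈ D, ∀ ε > (0 : ℝ), ∃ g ∈ D, |f - g| ≤ ε • t

theorem RelativelyUniformlyDense.exists_ge [IsOrderedAddMonoid E] {D : Submodule ℝ E}
    (hD : RelativelyUniformlyDense (D : Set E)) (f : E) : ∃ x ∈ D, f ≤ x := by
  obtain ⟨t, ht, happrox⟩ := hD f
  obtain ⟨g, hg, hfg⟩ := happrox 1 one_pos
  refine ⟨g + t, D.add_mem hg ht, ?_⟩
  rw [← sub_le_iff_le_add', ← one_smul ℝ t]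
  exact (le_abs_self _).trans hfg

theorem RelativelyUniformlyDense.positiveLinearMap_ext {D : Set E}
    (hD : RelativelyUniformlyDense D) {Φ Ψ : E →ₚ[ℝ] ℝ} (h : Set.EqOn Φ Ψ D) : Φ = Ψ := by
  ext f
  obtain ⟨t, ht, happrox⟩ := hD f
  rw [← sub_eq_zero]
  refine eq_zero_of_forall_abs_le_mul (c := 2 * Φ t) fun ε hε => ?_
  obtain ⟨g, hg, hfg⟩ := happrox ε hε
  calc |Φ f - Ψ f| = |(Φ f - Φ g) - (Ψ f - Ψ g)| := by rw [h hg]; ring_nf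
    _ ≤ |Φ f - Φ g| + |Ψ f - Ψ g| := abs_sub _ _
    _ ≤ ε * Φ t + ε * Ψ t :=
      add_le_add (Φ.abs_apply_sub_apply_le hfg) (Ψ.abs_apply_sub_apply_le hfg)
    _ = ε * (2 * Φ t) := by rw [← h ht]; ring

end OrderedModule

/-- Riesz–Markov type representation: under assumption (A), every positive linear
functional on the subspace `C` of compactly supported continuous functions is
represented by a unique locally finite Borel measure. -/
theorem stmt_0 {E : Type*} [MetricSpace E] [LocallyCompactSpace E]
    [TopologicalSpace.SeparableSpace E] [MeasurableSpace E] [BorelSpace E]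
    (C : Set (E → ℝ))
    (hCcont : ∀ f ∈ C, Continuous f) (hCsupp : ∀ f ∈ C, HasCompactSupport f)
    (hCadd : ∀ f ∈ C, ∀ g ∈ C, f + g ∈ C) (hCsmul : ∀ (a : ℝ), ∀ f ∈ C, a • f ∈ C)
    (hA : ∀ f : E → ℝ, Continuous f → HasCompactSupport f →
      ∃ ftil ∈ C, ∀ ε > (0:ℝ), ∃ fε ∈ C, ∀ x, |f x - fε x| ≤ ε * ftil x)
    (Λ : (E → ℝ) → ℝ)
    (hΛadd : ∀ f ∈ C, ∀ g ∈ C, Λ (f + g) = Λ f + Λ g)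
    (hΛsmul : ∀ (a : ℝ), ∀ f ∈ C, Λ (a • f) = a * Λ f)
    (hΛpos : ∀ f ∈ C, (∀ x, 0 ≤ f x) → 0 ≤ Λ f) :
    ∃! μ : Measure E, IsLocallyFiniteMeasure μ ∧ ∀ f ∈ C, ∫ x, f x ∂μ = Λ f := by
  have : SecondCountableTopology E := UniformSpace.secondCountable_of_separable E
  let lift (f : E → ℝ) (hf : f ∈ C) : C_c(E, ℝ) := ⟨⟨f, hCcont f hf⟩, hCsupp f hf⟩
  have hC0 : (0 : E → ℝ) ∈ C := by
    obtain ⟨t, ht, -⟩ := hA 0 continuous_const HasCompactSupport.zero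
    simpa using hCsmul 0 t ht
  let D : Submodule ℝ C_c(E, ℝ) :=
    { carrier := {f | ⇑f ∈ C}
      add_mem' := fun hf hg => hCadd _ hf _ hg
      zero_mem' := hC0
      smul_mem' := fun a _ hf => hCsmul a _ hf }
  let ℓ : D →ₗ[ℝ] ℝ :=
    { toFun := fun f => Λ f
      map_add' := fun f g => hΛadd _ f.2 _ g.2
      map_smul' := fun a f => hΛsmul a _ f.2 }
  have hD : RelativelyUniformlyDense (D : Set C_c(E, ℝ)) := fun f => by
    obtain ⟨t, ht, happrox⟩ := hA f f.continuous f.hasCompactSupport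
    refine ⟨lift t ht, ht, fun ε hε => ?_⟩
    obtain ⟨g, hg, hfg⟩ := happrox ε hε
    exact ⟨lift g hg, hg, hfg⟩
  obtain ⟨Φ, hΦ⟩ := exists_positiveLinearMap_extend_of_majorizing ℓ
    (fun f hf => hΛpos _ f.2 hf) hD.exists_ge
  refine ⟨RealRMK.rieszMeasure Φ, ⟨inferInstance, fun f hf => ?_⟩, fun ν ⟨_, hνΛ⟩ => ?_⟩
  · exact (RealRMK.integral_rieszMeasure Φ (lift f hf)).trans (hΦ ⟨_, hf⟩)
  · rw [← RealRMK.rieszMeasure_integralPositiveLinearMap (μ := ν)]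
    congr 1
    exact hD.positiveLinearMap_ext fun f hf => (hνΛ f hf).trans (hΦ ⟨f, hf⟩).symm
end

section
/- Under assumption (A), the functional $\bar\Lambda(f):=\sup\{\Lambda(g): g\in\tilde{\mathcal C}, g\le f\}$ defined for $f\in C_0^+(\tilde E)$ is finite and additive: $\bar\Lambda(f+g)=\bar\Lambda(f)+\bar\Lambda(g)$ for all $f,g\in C_0^+(\tilde E)$. -/
open MeasureTheory

/-- Under assumption (A), the extension `Λ̄ f = sup {Λ g : g ∈ C, g ≤ f}` of a positive
linear functional is finite (the sup is over a nonempty bounded-above set) and additive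
on nonnegative compactly supported continuous functions. -/
theorem stmt_2 {E : Type*} [MetricSpace E] [LocallyCompactSpace E]
    [TopologicalSpace.SeparableSpace E]
    (C : Set (E → ℝ))
    (hCcont : ∀ f ∈ C, Continuous f) (hCsupp : ∀ f ∈ C, HasCompactSupport f)
    (hC0 : (0 : E → ℝ) ∈ C)
    (hCadd : ∀ f ∈ C, ∀ g ∈ C, f + g ∈ C) (hCsmul : ∀ (a : ℝ), ∀ f ∈ C, a • f ∈ C)
    (hA : ∀ f : E → ℝ, Continuous f → HasCompactSupport f →
      ∃ ftil ∈ C, ∀ ε > (0:ℝ), ∃ fε ∈ C, ∀ x, |f x - fε x| ≤ ε * ftil x)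
    (Λ : (E → ℝ) → ℝ)
    (hΛadd : ∀ f ∈ C, ∀ g ∈ C, Λ (f + g) = Λ f + Λ g)
    (hΛsmul : ∀ (a : ℝ), ∀ f ∈ C, Λ (a • f) = a * Λ f)
    (hΛpos : ∀ f ∈ C, (∀ x, 0 ≤ f x) → 0 ≤ Λ f) :
    ∀ f g : E → ℝ, Continuous f → HasCompactSupport f → (∀ x, 0 ≤ f x) →
      Continuous g → HasCompactSupport g → (∀ x, 0 ≤ g x) →
      BddAbove (Λ '' {h | h ∈ C ∧ h ≤ f}) ∧
      sSup (Λ '' {h | h ∈ C ∧ h ≤ f + g})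
        = sSup (Λ '' {h | h ∈ C ∧ h ≤ f}) + sSup (Λ '' {h | h ∈ C ∧ h ≤ g}) := by
  -- basic algebraic facts about C and Λ
  have hCsub : ∀ a ∈ C, ∀ b ∈ C, a - b ∈ C := by
    intro a ha b hb
    have := hCadd a ha ((-1 : ℝ) • b) (hCsmul (-1) b hb)
    simpa [sub_eq_add_neg, neg_one_smul] using this
  have hΛsub : ∀ a ∈ C, ∀ b ∈ C, Λ (a - b) = Λ a - Λ b := by
    intro a ha b hb
    have h1 := hΛadd a ha ((-1 : ℝ) • b) (hCsmul (-1) b hb)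
    have h2 := hΛsmul (-1) b hb
    have h3 : a - b = a + (-1 : ℝ) • b := by
      funext x; simp [sub_eq_add_neg]
    rw [h3, h1, h2]; ring
  have hmono : ∀ a ∈ C, ∀ b ∈ C, a ≤ b → Λ a ≤ Λ b := by
    intro a ha b hb hab
    have hmem := hCsub b hb a ha
    have hpos := hΛpos _ hmem (fun x => by
      have := hab x; simpa [sub_nonneg] using this)
    have heq := hΛsub b hb a ha
    linarith [heq ▸ hpos]
  -- boundedness of the sup-defining set
  have hbdd : ∀ f : E → ℝ, Continuous f → HasCompactSupport f →
      BddAbove (Λ '' {h | h ∈ C ∧ h ≤ f}) := by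
    intro f hf hfs
    obtain ⟨ftil, hftil, hAf⟩ := hA f hf hfs
    obtain ⟨f1, hf1, hf1le⟩ := hAf 1 one_pos
    refine ⟨Λ (f1 + ftil), ?_⟩
    rintro y ⟨h, ⟨hC', hle⟩, rfl⟩
    refine hmono h hC' (f1 + ftil) (hCadd f1 hf1 ftil hftil) ?_
    intro x
    have h1 := abs_le.mp (hf1le x)
    have h2 := hle x
    simp only [Pi.add_apply]
    linarith [h1.1, h1.2]
  intro f g hf hfs hf0 hg hgs hg0
  have hbf := hbdd f hf hfs
  have hbg := hbdd g hg hgs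
  have hbfg := hbdd (f + g) (hf.add hg) (hfs.add hgs)
  have hnef : (Λ '' {h | h ∈ C ∧ h ≤ f}).Nonempty :=
    ⟨Λ 0, 0, ⟨hC0, fun x => hf0 x⟩, rfl⟩
  have hneg : (Λ '' {h | h ∈ C ∧ h ≤ g}).Nonempty :=
    ⟨Λ 0, 0, ⟨hC0, fun x => hg0 x⟩, rfl⟩
  have hnefg : (Λ '' {h | h ∈ C ∧ h ≤ f + g}).Nonempty :=
    ⟨Λ 0, 0, ⟨hC0, fun x => by
      have := add_nonneg (hf0 x) (hg0 x); simpa using this⟩, rfl⟩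
  refine ⟨hbf, le_antisymm ?_ ?_⟩
  · -- subadditivity : sSup (f+g) ≤ sSup f + sSup g
    refine csSup_le hnefg ?_
    rintro y ⟨h, ⟨hhC, hhle⟩, rfl⟩
    refine le_of_forall_pos_le_add ?_
    intro δ hδ
    -- split h as min h f + (h - min h f)
    set u : E → ℝ := fun x => min (h x) (f x) with hu
    have hucont : Continuous u := (hCcont h hhC).min hf
    have hsupp : Function.support u ⊆ tsupport h ∪ tsupport f := by
      intro x hx
      by_contra hcon
      rw [Set.mem_union, not_or] at hcon
      have h1 : h x = 0 := image_eq_zero_of_notMem_tsupport hcon.1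
      have h2 : f x = 0 := image_eq_zero_of_notMem_tsupport hcon.2
      exact hx (by simp [hu, h1, h2])
    have husupp : HasCompactSupport u := by
      have hcl : IsClosed (tsupport h ∪ tsupport f) :=
        (isClosed_tsupport h).union (isClosed_tsupport f)
      exact IsCompact.of_isClosed_subset ((hCsupp h hhC).union hfs)
        isClosed_closure (closure_minimal hsupp hcl)
    obtain ⟨util, hutil, hAu⟩ := hA u hucont husupp
    have hutil0 : ∀ x, 0 ≤ util x := by
      obtain ⟨u1, _, hu1⟩ := hAu 1 one_pos
      intro x
      have := (abs_nonneg _).trans (hu1 x)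
      linarith
    have hΛutil : 0 ≤ Λ util := hΛpos util hutil hutil0
    set ε := δ / (2 * (Λ util + 1)) with hε
    have hden : 0 < 2 * (Λ util + 1) := by linarith
    have hεpos : 0 < ε := div_pos hδ hden
    obtain ⟨uε, huε, huεle⟩ := hAu ε hεpos
    set a : E → ℝ := uε - ε • util with ha
    set b : E → ℝ := (h - uε) - ε • util with hb
    have haC : a ∈ C := hCsub _ huε _ (hCsmul ε util hutil)
    have hbC : b ∈ C := hCsub _ (hCsub h hhC _ huε) _ (hCsmul ε util hutil)
    have hale : a ≤ f := by
      intro x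
      have h1 := abs_le.mp (huεle x)
      have h2 : u x ≤ f x := min_le_right _ _
      simp only [ha, Pi.sub_apply, Pi.smul_apply, smul_eq_mul]
      linarith [h1.1, h1.2]
    have hble : b ≤ g := by
      intro x
      have h1 := abs_le.mp (huεle x)
      have h2 : h x - u x ≤ g x := by
        rcases le_total (h x) (f x) with hc | hc
        · have : u x = h x := min_eq_left hc
          rw [this]; simpa using hg0 x
        · have : u x = f x := min_eq_right hc
          rw [this]
          have := hhle x
          simp only [Pi.add_apply] at this
          linarith
      simp only [hb, Pi.sub_apply, Pi.smul_apply, smul_eq_mul]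
      linarith [h1.1, h1.2]
    have hΛa : Λ a = Λ uε - ε * Λ util := by
      rw [ha, hΛsub _ huε _ (hCsmul ε util hutil), hΛsmul ε util hutil]
    have hΛb : Λ b = Λ h - Λ uε - ε * Λ util := by
      rw [hb, hΛsub _ (hCsub h hhC _ huε) _ (hCsmul ε util hutil),
        hΛsub h hhC _ huε, hΛsmul ε util hutil]
    have hb1 : Λ a ≤ sSup (Λ '' {h | h ∈ C ∧ h ≤ f}) :=
      le_csSup hbf ⟨a, ⟨haC, hale⟩, rfl⟩
    have hb2 : Λ b ≤ sSup (Λ '' {h | h ∈ C ∧ h ≤ g}) :=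
      le_csSup hbg ⟨b, ⟨hbC, hble⟩, rfl⟩
    have hkey : 2 * ε * (Λ util + 1) = δ := by
      rw [hε]; field_simp
    nlinarith [hΛutil, hεpos]
  · -- superadditivity
    have key : ∀ y ∈ Λ '' {h | h ∈ C ∧ h ≤ f}, ∀ z ∈ Λ '' {h | h ∈ C ∧ h ≤ g},
        y + z ≤ sSup (Λ '' {h | h ∈ C ∧ h ≤ f + g}) := by
      rintro y ⟨p, ⟨hpC, hple⟩, rfl⟩ z ⟨q, ⟨hqC, hqle⟩, rfl⟩
      rw [← hΛadd p hpC q hqC]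
      refine le_csSup hbfg ⟨p + q, ⟨hCadd p hpC q hqC, ?_⟩, rfl⟩
      intro x
      have := add_le_add (hple x) (hqle x)
      simpa using this
    have h1 : sSup (Λ '' {h | h ∈ C ∧ h ≤ f})
        ≤ sSup (Λ '' {h | h ∈ C ∧ h ≤ f + g}) - sSup (Λ '' {h | h ∈ C ∧ h ≤ g}) := by
      refine csSup_le hnef ?_
      intro y hy
      rw [le_sub_iff_add_le, add_comm, ← le_sub_iff_add_le]
      refine csSup_le hneg ?_
      intro z hz
      have := key y hy z hz
      linarith
    linarith
end
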